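/- arXiv:2204.10103 — 3 statements merged into one kernel-verified Lean document; each statement's English description precedes it below -/
import Mathlib

section
/- Let H ∈ (0,1/2], p > 1 and C > 0. For ε ∈ (0,1) set k^ε(t,s) = ∫_0^{min(s,t)} K^ε(t,u) K^ε(s,u) du, where K^ε(r,u) = C ε^H (r−u)^{H−1/2}(−log(ε(r−u)))^{−p} for u < r and 0 otherwise, and set k(t,s) = C² ∫_0^{min(s,t)} (t−u)^{H−1/2}(s−u)^{H−1/2} du. Then the normalized covariances k^ε(t,s)/(ε^{2H}(−log ε)^{−2p}) converge to k(t,s) uniformly on (t,s) ∈ [0,1]² as ε → 0⁺. -/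
open Real Filter Set MeasureTheory

/-- The short-time rescaled log-modulated kernel, extended by `0` for `u ≥ r`. -/
noncomputable def Keps (H p C ε r u : ℝ) : ℝ :=
  if u < r then C * ε ^ H * (r - u) ^ (H - 1 / 2) * (-Real.log (ε * (r - u))) ^ (-p) else 0

open Topology

/-!
After division by `ε^{2H} (-log ε)^{-2p}`, the integrand of `k^ε(t, s)` is the
Riemann–Liouville integrand times `ρ_ε(t - u) ρ_ε(s - u)`, where
`ρ_ε(x) = (-log (ε x))^{-p} / (-log ε)^{-p}` (`logRatio`) is monotone on `(0, 1]` with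
`ρ_ε(1) = 1`. So this factor lies in `[0, 1]`, and it is at least `ρ_ε(δ)²` where
`min s t - u > δ`. As the Riemann–Liouville integrand is dominated by `(min s t - u)^{2H-1}`,
and `1 ≤ (δ / (min s t - u))^H` near the diagonal, the error is at most
`C² ((1 - ρ_ε(δ)²) / (2H) + δ^H / H)` uniformly in `(t, s)`. For fixed `δ`,
`ρ_ε(δ) = (1 + log δ / log ε)^{-p} → 1` as `ε → 0⁺`; then let `δ → 0`.
-/

theorem tendstoUniformlyOn_of_eventually_dist_le {ι α β E : Type*} [PseudoMetricSpace E]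
    {F : ι → α → E} {f : α → E} {l : Filter ι} {s : Set α} {L : Filter β} [L.NeBot]
    (b : β → ι → ℝ) (c : β → ℝ) (hb : ∀ᶠ δ in L, Tendsto (b δ) l (𝓝 0))
    (hc : Tendsto c L (𝓝 0))
    (h : ∀ᶠ δ in L, ∀ᶠ i in l, ∀ x ∈ s, dist (f x) (F i x) ≤ b δ i + c δ) :
    TendstoUniformlyOn F f l s := by
  rw [Metric.tendstoUniformlyOn_iff]
  intro η hη
  obtain ⟨δ, hbδ, hδ, hcδ⟩ := (hb.and (h.and (hc.eventually_lt_const (half_pos hη)))).exists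
  filter_upwards [hδ, hbδ.eventually_lt_const (half_pos hη)] with i hi hbi x hx
  linarith [hi x hx]

section PowerIntegrals

variable {q : ℝ}

theorem intervalIntegrable_sub_rpow (hq : -1 < q) (m a b : ℝ) :
    IntervalIntegrable (fun u => (m - u) ^ q) volume a b := by
  simpa using
    (intervalIntegral.intervalIntegrable_rpow' (a := m - a) (b := m - b) hq).comp_sub_left m

theorem integral_sub_rpow (hq : -1 < q) (m : ℝ) :
    ∫ u in (0 : ℝ)..m, (m - u) ^ q = m ^ (q + 1) / (q + 1) := by
  rw [intervalIntegral.integral_comp_sub_left (fun x => x ^ q) m, integral_rpow (Or.inl hq),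
    sub_self, sub_zero, zero_rpow (by linarith), sub_zero]

theorem intervalIntegrable_of_abs_le_sub_rpow {f : ℝ → ℝ} {m : ℝ} (hq : -1 < q) (hm : 0 ≤ m)
    (hf : Measurable f) (hb : ∀ u ∈ Ioo 0 m, |f u| ≤ (m - u) ^ q) :
    IntervalIntegrable f volume 0 m := by
  rw [intervalIntegrable_iff_integrableOn_Ioo_of_le hm]
  exact ((intervalIntegrable_iff_integrableOn_Ioo_of_le hm).1
    (intervalIntegrable_sub_rpow hq m 0 m)).mono' hf.aestronglyMeasurable
    ((ae_restrict_iff' measurableSet_Ioo).2 (ae_of_all _ hb))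

end PowerIntegrals

theorem one_sub_le_add_div_rpow {H δ v a g : ℝ} (hH : 0 ≤ H) (hδ : 0 ≤ δ) (hv : 0 < v)
    (ha : a ≤ 1) (hg : 0 ≤ g) (hga : δ < v → a ≤ g) : 1 - g ≤ (1 - a) + (δ / v) ^ H := by
  rcases lt_or_ge δ v with hδv | hvδ
  · linarith [hga hδv, rpow_nonneg (div_nonneg hδ hv.le) H]
  · linarith [one_le_rpow ((one_le_div hv).2 hvδ) hH]

theorem integral_mul_one_sub_le {H m δ a : ℝ} {f g : ℝ → ℝ} (hH : 0 < H) (hm : m ∈ Icc 0 1)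
    (hδ : 0 ≤ δ) (ha : a ≤ 1) (hfg : IntervalIntegrable (fun u => f u * (1 - g u)) volume 0 m)
    (hf : ∀ u ∈ Ioo 0 m, 0 ≤ f u ∧ f u ≤ (m - u) ^ (2 * H - 1))
    (hg : ∀ u ∈ Ioo 0 m, 0 ≤ g u) (hga : ∀ u ∈ Ioo 0 m, δ < m - u → a ≤ g u) :
    ∫ u in (0 : ℝ)..m, f u * (1 - g u) ≤ (1 - a) / (2 * H) + δ ^ H / H := by
  have hq₁ : -1 < 2 * H - 1 := by linarith
  have hq₂ : -1 < H - 1 := by linarith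
  calc ∫ u in (0 : ℝ)..m, f u * (1 - g u)
      ≤ ∫ u in (0 : ℝ)..m, ((1 - a) * (m - u) ^ (2 * H - 1) + δ ^ H * (m - u) ^ (H - 1)) := by
        refine intervalIntegral.integral_mono_on_of_le_Ioo hm.1 hfg
          (((intervalIntegrable_sub_rpow hq₁ m 0 m).const_mul _).add
            ((intervalIntegrable_sub_rpow hq₂ m 0 m).const_mul _)) fun u hu => ?_
        have hv : 0 < m - u := sub_pos.2 hu.2
        have hsplit :
            (m - u) ^ (2 * H - 1) * (δ / (m - u)) ^ H = δ ^ H * (m - u) ^ (H - 1) := by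
          rw [div_rpow hδ hv.le, mul_div_left_comm, ← rpow_sub hv]
          ring_nf
        have hG := one_sub_le_add_div_rpow hH.le hδ hv ha (hg u hu) (hga u hu)
        calc f u * (1 - g u) ≤ f u * ((1 - a) + (δ / (m - u)) ^ H) :=
              mul_le_mul_of_nonneg_left hG (hf u hu).1
          _ ≤ (m - u) ^ (2 * H - 1) * ((1 - a) + (δ / (m - u)) ^ H) :=
              mul_le_mul_of_nonneg_right (hf u hu).2
                (add_nonneg (sub_nonneg.2 ha) (rpow_nonneg (div_nonneg hδ hv.le) _))
          _ = _ := by rw [mul_add, hsplit, mul_comm]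
    _ = (1 - a) * (m ^ (2 * H) / (2 * H)) + δ ^ H * (m ^ H / H) := by
        rw [intervalIntegral.integral_add ((intervalIntegrable_sub_rpow hq₁ m 0 m).const_mul _)
          ((intervalIntegrable_sub_rpow hq₂ m 0 m).const_mul _),
          intervalIntegral.integral_const_mul, intervalIntegral.integral_const_mul,
          integral_sub_rpow hq₁, integral_sub_rpow hq₂]
        ring_nf
    _ ≤ (1 - a) * (1 / (2 * H)) + δ ^ H * (1 / H) := by
        have : 0 ≤ 1 - a := sub_nonneg.2 ha
        gcongr <;> exact rpow_le_one hm.1 hm.2 (by linarith)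
    _ = (1 - a) / (2 * H) + δ ^ H / H := by ring

theorem abs_integral_sub_integral_mul_le {H m δ a : ℝ} {f g : ℝ → ℝ} (hH : 0 < H)
    (hm : m ∈ Icc 0 1) (hδ : 0 ≤ δ) (ha : a ≤ 1) (hf_meas : Measurable f)
    (hg_meas : Measurable g) (hf : ∀ u ∈ Ioo 0 m, 0 ≤ f u ∧ f u ≤ (m - u) ^ (2 * H - 1))
    (hg : ∀ u ∈ Ioo 0 m, g u ∈ Icc 0 1) (hga : ∀ u ∈ Ioo 0 m, δ < m - u → a ≤ g u) :
    |(∫ u in (0 : ℝ)..m, f u) - ∫ u in (0 : ℝ)..m, f u * g u| ≤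
      (1 - a) / (2 * H) + δ ^ H / H := by
  have hq : -1 < 2 * H - 1 := by linarith
  have hfi : IntervalIntegrable f volume 0 m :=
    intervalIntegrable_of_abs_le_sub_rpow hq hm.1 hf_meas fun u hu => by
      rw [abs_of_nonneg (hf u hu).1]
      exact (hf u hu).2
  have hfgi : IntervalIntegrable (fun u => f u * g u) volume 0 m :=
    intervalIntegrable_of_abs_le_sub_rpow hq hm.1 (hf_meas.mul hg_meas) fun u hu => by
      rw [abs_of_nonneg (mul_nonneg (hf u hu).1 (hg u hu).1)]
      exact (mul_le_of_le_one_right (hf u hu).1 (hg u hu).2).trans (hf u hu).2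
  have hdiff : IntervalIntegrable (fun u => f u * (1 - g u)) volume 0 m := by
    simpa only [mul_one_sub] using hfi.sub hfgi
  have hnonneg : 0 ≤ ∫ u in (0 : ℝ)..m, f u * (1 - g u) := by
    simpa using intervalIntegral.integral_mono_on_of_le_Ioo hm.1 intervalIntegrable_const hdiff
      fun u hu => mul_nonneg (hf u hu).1 (sub_nonneg.2 (hg u hu).2)
  rw [← intervalIntegral.integral_sub hfi hfgi]
  simp only [← mul_one_sub]
  rw [abs_of_nonneg hnonneg]
  exact integral_mul_one_sub_le hH hm hδ ha hdiff hf (fun u hu => (hg u hu).1) hga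

noncomputable def logRatio (p ε x : ℝ) : ℝ := (-log (ε * x)) ^ (-p) / (-log ε) ^ (-p)

section LogRatio

variable {p ε : ℝ}

theorem logRatio_nonneg (hε : ε ∈ Icc 0 1) {x : ℝ} (hx : x ∈ Icc 0 1) : 0 ≤ logRatio p ε x :=
  div_nonneg
    (rpow_nonneg
      (neg_nonneg.2 (log_nonpos (mul_nonneg hε.1 hx.1) (mul_le_one₀ hε.2 hx.1 hx.2))) _)
    (rpow_nonneg (neg_nonneg.2 (log_nonpos hε.1 hε.2)) _)

theorem logRatio_one (hε : ε ∈ Ioo 0 1) : logRatio p ε 1 = 1 := by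
  rw [logRatio, mul_one, div_self (rpow_pos_of_pos (neg_pos.2 (log_neg hε.1 hε.2)) _).ne']

theorem logRatio_monotoneOn (hp : 0 ≤ p) (hε : ε ∈ Ioo 0 1) :
    MonotoneOn (logRatio p ε) (Ioc 0 1) := by
  intro x hx y hy hxy
  have hy_pos : 0 < -log (ε * y) :=
    neg_pos.2 (log_neg (mul_pos hε.1 hy.1)
      (mul_lt_one_of_nonneg_of_lt_one_left hε.1.le hε.2 hy.2))
  have hlog : -log (ε * y) ≤ -log (ε * x) :=
    neg_le_neg (log_le_log (mul_pos hε.1 hx.1) (mul_le_mul_of_nonneg_left hxy hε.1.le))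
  exact div_le_div_of_nonneg_right (rpow_le_rpow_of_nonpos hy_pos hlog (neg_nonpos.2 hp))
    (rpow_nonneg (neg_nonneg.2 (log_nonpos hε.1.le hε.2.le)) _)

theorem logRatio_le_one (hp : 0 ≤ p) (hε : ε ∈ Ioo 0 1) {x : ℝ} (hx : x ∈ Ioc 0 1) :
    logRatio p ε x ≤ 1 :=
  logRatio_one hε ▸ logRatio_monotoneOn hp hε hx ⟨one_pos, le_rfl⟩ hx.2

theorem tendsto_logRatio {δ : ℝ} (hδ : 0 < δ) :
    Tendsto (fun ε => logRatio p ε δ) (𝓝[>] 0) (𝓝 1) := by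
  have hquot : Tendsto (fun ε => 1 + log δ / log ε) (𝓝[>] 0) (𝓝 1) := by
    simpa using tendsto_const_nhds.add (tendsto_const_nhds.div_atBot tendsto_log_nhdsGT_zero)
  have hcont : ContinuousAt (fun x : ℝ => x ^ (-p)) 1 :=
    continuousAt_rpow_const 1 (-p) (Or.inl one_ne_zero)
  refine (one_rpow (-p) ▸ hcont.tendsto.comp hquot).congr' ?_
  have hεδ : ∀ᶠ ε in 𝓝[>] (0 : ℝ), ε * δ < 1 := nhdsWithin_le_nhds <|
    ((continuous_mul_const δ).tendsto' 0 0 (zero_mul δ)).eventually_lt_const one_pos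
  filter_upwards [Ioo_mem_nhdsGT one_pos, hεδ] with ε hε hεδ
  have hlogε : log ε < 0 := log_neg hε.1 hε.2
  rw [Function.comp_apply, logRatio,
    ← div_rpow (neg_nonneg.2 (log_nonpos (mul_pos hε.1 hδ).le hεδ.le)) (neg_nonneg.2 hlogε.le),
    neg_div_neg_eq, log_mul hε.1.ne' hδ.ne', add_div, div_self hlogε.ne]

end LogRatio

section Kernel

variable {H p C ε t s : ℝ}

theorem Keps_mul_Keps {u : ℝ} (hε : ε ∈ Ioo 0 1) (ht : u < t) (hs : u < s) :
    Keps H p C ε t u * Keps H p C ε s u =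
      ε ^ (2 * H) * (-log ε) ^ (-(2 * p)) * (C ^ 2 * ((t - u) ^ (H - 1 / 2) *
        (s - u) ^ (H - 1 / 2) * (logRatio p ε (t - u) * logRatio p ε (s - u)))) := by
  have hL : 0 < -log ε := neg_pos.2 (log_neg hε.1 hε.2)
  have hLp : 0 < (-log ε) ^ (-p) := rpow_pos_of_pos hL _
  rw [Keps, Keps, if_pos ht, if_pos hs, logRatio, logRatio, two_mul, rpow_add hε.1,
    show -(2 * p) = -p + -p by ring, rpow_add hL]
  field_simp

theorem integral_Keps_mul_Keps_div (hε : ε ∈ Ioo 0 1) (hm : 0 ≤ min s t) :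
    (∫ u in (0 : ℝ)..min s t, Keps H p C ε t u * Keps H p C ε s u) /
        (ε ^ (2 * H) * (-log ε) ^ (-(2 * p))) =
      C ^ 2 * ∫ u in (0 : ℝ)..min s t, (t - u) ^ (H - 1 / 2) * (s - u) ^ (H - 1 / 2) *
        (logRatio p ε (t - u) * logRatio p ε (s - u)) := by
  have hc : ε ^ (2 * H) * (-log ε) ^ (-(2 * p)) ≠ 0 :=
    (mul_pos (rpow_pos_of_pos hε.1 _) (rpow_pos_of_pos (neg_pos.2 (log_neg hε.1 hε.2)) _)).ne'
  rw [intervalIntegral.integral_congr_ae (g := fun u => ε ^ (2 * H) * (-log ε) ^ (-(2 * p)) *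
      (C ^ 2 * ((t - u) ^ (H - 1 / 2) * (s - u) ^ (H - 1 / 2) *
        (logRatio p ε (t - u) * logRatio p ε (s - u))))) ?_,
    intervalIntegral.integral_const_mul, mul_div_cancel_left₀ _ hc,
    intervalIntegral.integral_const_mul]
  filter_upwards [volume.ae_ne (min s t)] with u hum hu
  rw [uIoc_of_le hm] at hu
  have hu' : u < min s t := hu.2.lt_of_ne hum
  exact Keps_mul_Keps hε (hu'.trans_le (min_le_right _ _)) (hu'.trans_le (min_le_left _ _))

theorem rpow_mul_rpow_le_sub_rpow {m u : ℝ} (hH : H ≤ 1 / 2) (hmt : m ≤ t) (hms : m ≤ s)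
    (hu : u < m) : (t - u) ^ (H - 1 / 2) * (s - u) ^ (H - 1 / 2) ≤ (m - u) ^ (2 * H - 1) := by
  have hv : 0 < m - u := sub_pos.2 hu
  have hexp : H - 1 / 2 ≤ 0 := by linarith
  calc (t - u) ^ (H - 1 / 2) * (s - u) ^ (H - 1 / 2)
      ≤ (m - u) ^ (H - 1 / 2) * (m - u) ^ (H - 1 / 2) :=
        mul_le_mul (rpow_le_rpow_of_nonpos hv (by linarith) hexp)
          (rpow_le_rpow_of_nonpos hv (by linarith) hexp) (rpow_nonneg (by linarith) _)
          (rpow_nonneg hv.le _)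
    _ = (m - u) ^ (2 * H - 1) := by rw [← rpow_add hv]; ring_nf

theorem dist_integral_Keps_mul_Keps_div_le {δ : ℝ} (hH0 : 0 < H) (hH : H ≤ 1 / 2) (hp : 0 ≤ p)
    (hε : ε ∈ Ioo 0 1) (hδ : δ ∈ Ioc 0 1) (ht : t ∈ Icc 0 1) (hs : s ∈ Icc 0 1) :
    dist (C ^ 2 * ∫ u in (0 : ℝ)..min s t, (t - u) ^ (H - 1 / 2) * (s - u) ^ (H - 1 / 2))
        ((∫ u in (0 : ℝ)..min s t, Keps H p C ε t u * Keps H p C ε s u) /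
          (ε ^ (2 * H) * (-log ε) ^ (-(2 * p))))
      ≤ C ^ 2 * ((1 - logRatio p ε δ ^ 2) / (2 * H) + δ ^ H / H) := by
  set m := min s t
  have hmt : m ≤ t := min_le_right _ _
  have hms : m ≤ s := min_le_left _ _
  have hm : m ∈ Icc 0 1 := ⟨le_min hs.1 ht.1, hmt.trans ht.2⟩
  have hε' : ε ∈ Icc 0 1 := Ioo_subset_Icc_self hε
  have hsub : ∀ r, m ≤ r → r ≤ 1 → ∀ u ∈ Ioo 0 m, r - u ∈ Ioc 0 1 := fun r hmr hr u hu =>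
    ⟨by linarith [hu.2], by linarith [hu.1]⟩
  have hr : logRatio p ε δ ∈ Icc 0 1 :=
    ⟨logRatio_nonneg hε' (Ioc_subset_Icc_self hδ), logRatio_le_one hp hε hδ⟩
  rw [integral_Keps_mul_Keps_div hε hm.1, dist_eq, ← mul_sub, abs_mul,
    abs_of_nonneg (sq_nonneg C)]
  gcongr
  refine abs_integral_sub_integral_mul_le hH0 hm hδ.1.le (pow_le_one₀ hr.1 hr.2)
    (by fun_prop) (by unfold logRatio; fun_prop)
    (fun u hu => ⟨?_, rpow_mul_rpow_le_sub_rpow hH hmt hms hu.2⟩) (fun u hu => ?_)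
    (fun u hu hδu => ?_)
  · exact mul_nonneg (rpow_nonneg (by linarith [hu.2]) _) (rpow_nonneg (by linarith [hu.2]) _)
  · have htu := hsub t hmt ht.2 u hu
    have hsu := hsub s hms hs.2 u hu
    exact ⟨mul_nonneg (logRatio_nonneg hε' (Ioc_subset_Icc_self htu))
        (logRatio_nonneg hε' (Ioc_subset_Icc_self hsu)),
      mul_le_one₀ (logRatio_le_one hp hε htu) (logRatio_nonneg hε' (Ioc_subset_Icc_self hsu))
        (logRatio_le_one hp hε hsu)⟩
  · have htu := hsub t hmt ht.2 u hu
    have hsu := hsub s hms hs.2 u hu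
    rw [sq]
    exact mul_le_mul (logRatio_monotoneOn hp hε hδ htu (by linarith))
      (logRatio_monotoneOn hp hε hδ hsu (by linarith)) hr.1
      (logRatio_nonneg hε' (Ioc_subset_Icc_self htu))

end Kernel

theorem stmt_1_general (H p C : ℝ) (hH0 : 0 < H) (hH : H ≤ 1 / 2) (hp : 1 < p) :
    TendstoUniformlyOn
      (fun ε : ℝ => fun ts : ℝ × ℝ =>
        (∫ u in (0:ℝ)..(min ts.2 ts.1), Keps H p C ε ts.1 u * Keps H p C ε ts.2 u) /
          (ε ^ (2 * H) * (-Real.log ε) ^ (-(2 * p))))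
      (fun ts : ℝ × ℝ =>
        C ^ 2 * ∫ u in (0:ℝ)..(min ts.2 ts.1),
          (ts.1 - u) ^ (H - 1 / 2) * (ts.2 - u) ^ (H - 1 / 2))
      (nhdsWithin 0 (Set.Ioo 0 1))
      (Set.Icc 0 1 ×ˢ Set.Icc 0 1) := by
  have hl : 𝓝[Ioo (0 : ℝ) 1] 0 ≤ 𝓝[>] 0 := nhdsWithin_mono _ Ioo_subset_Ioi_self
  refine tendstoUniformlyOn_of_eventually_dist_le (L := 𝓝[>] 0)
    (fun δ ε => C ^ 2 * ((1 - logRatio p ε δ ^ 2) / (2 * H))) (fun δ => C ^ 2 * (δ ^ H / H))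
    ?_ ?_ ?_
  · filter_upwards [self_mem_nhdsWithin] with δ hδ
    have hr := (tendsto_logRatio (p := p) hδ).mono_left hl
    simpa using ((hr.pow 2).const_sub 1).div_const (2 * H) |>.const_mul (C ^ 2)
  · have h := ((continuous_rpow_const hH0.le).tendsto 0).mono_left
      (nhdsWithin_le_nhds (s := Ioi 0))
    simpa [zero_rpow hH0.ne'] using (h.div_const H).const_mul (C ^ 2)
  · filter_upwards [Ioo_mem_nhdsGT one_pos] with δ hδ
    filter_upwards [self_mem_nhdsWithin] with ε hε ts hts
    rw [← mul_add]
    exact dist_integral_Keps_mul_Keps_div_le hH0 hH (by linarith) hε (Ioo_subset_Ioc_self hδ)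
      hts.1 hts.2

/-- Condition (K1) for log-modulated rough volatility: the normalized covariances
`k^ε(t,s)/(ε^{2H}(-log ε)^{-2p})` converge uniformly on `[0,1]²` to the covariance
`k(t,s)` of the Riemann–Liouville process. -/
theorem stmt_1 (H p C : ℝ) (hH0 : 0 < H) (hH : H ≤ 1 / 2) (hp : 1 < p) (hC : 0 < C) :
    TendstoUniformlyOn
      (fun ε : ℝ => fun ts : ℝ × ℝ =>
        (∫ u in (0:ℝ)..(min ts.2 ts.1), Keps H p C ε ts.1 u * Keps H p C ε ts.2 u) /
          (ε ^ (2 * H) * (-Real.log ε) ^ (-(2 * p))))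
      (fun ts : ℝ × ℝ =>
        C ^ 2 * ∫ u in (0:ℝ)..(min ts.2 ts.1),
          (ts.1 - u) ^ (H - 1 / 2) * (ts.2 - u) ^ (H - 1 / 2))
      (nhdsWithin 0 (Set.Ioo 0 1))
      (Set.Icc 0 1 ×ˢ Set.Icc 0 1) :=
  stmt_1_general H p C hH0 hH hp
end

section
/- Let H ∈ (0,1/2) and p > 1. There exists ε₀ ∈ (0,1) such that for every ε ∈ (0,ε₀) and all 0 ≤ s < t ≤ 1, ∫_0^s ( (t−u)^{H−1/2} ((−log(ε(t−u)))/(−log ε))^{−p} − (s−u)^{H−1/2} ((−log(ε(s−u)))/(−log ε))^{−p} )² du ≤ ∫_0^s ( (t−u)^{H−1/2} − (s−u)^{H−1/2} )² du. -/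
/-!
Write `g(x) = x^(H-1/2)` and `m(x) = (-log(εx) / -log ε)^(-p)`, so the integrand on the left is
`(g(b) m(b) - g(a) m(a))²` with `a = s - u ≤ b = t - u ≤ 1`. On `(0, 1]` the factor `m` is
increasing with values in `(0, 1]`, while `g` is decreasing; once `p ≤ (1/2 - H)(-log ε)` the
product `g m` is decreasing as well. Then `0 ≤ g(a) m(a) - g(b) m(b) ≤ (g(a) - g(b)) m(b) ≤ g(a) - g(b)`,
so the inequality holds pointwise, and `ε₀ = exp(-p / (1/2 - H))` makes the condition on `ε` hold.
-/

open Real Filter Set MeasureTheory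

lemma rpow_mul_sub_log_le_rpow_mul_sub_log {a b δ ℓ : ℝ} (ha : 0 < a) (hab : a ≤ b)
    (hδ : 0 ≤ δ) (hb : 1 ≤ δ * (ℓ - log b)) :
    a ^ δ * (ℓ - log a) ≤ b ^ δ * (ℓ - log b) := by
  have hb0 : 0 < b := ha.trans_le hab
  have hℓb : 0 ≤ ℓ - log b := (pos_of_mul_pos_right (one_pos.trans_le hb) hδ).le
  have hlog : 0 ≤ log (b / a) := log_nonneg ((one_le_div ha).mpr hab)
  have hexp : 1 + δ * log (b / a) ≤ (b / a) ^ δ := by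
    rw [rpow_def_of_pos (div_pos hb0 ha)]
    linarith [add_one_le_exp (log (b / a) * δ)]
  have hstep : ℓ - log a ≤ (ℓ - log b) * (b / a) ^ δ :=
    calc ℓ - log a = (ℓ - log b) + log (b / a) := by
          rw [log_div hb0.ne' ha.ne']; ring
      _ ≤ (ℓ - log b) * (1 + δ * log (b / a)) := by nlinarith
      _ ≤ (ℓ - log b) * (b / a) ^ δ := mul_le_mul_of_nonneg_left hexp hℓb
  calc a ^ δ * (ℓ - log a) ≤ a ^ δ * ((ℓ - log b) * (b / a) ^ δ) :=
        mul_le_mul_of_nonneg_left hstep (rpow_nonneg ha.le δ)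
    _ = b ^ δ * (ℓ - log b) := by
        rw [div_rpow hb0.le ha.le]
        field_simp [(rpow_pos_of_pos ha δ).ne']

noncomputable def logModulation (ε p x : ℝ) : ℝ := (-log (ε * x) / -log ε) ^ (-p)

section logModulation

variable {ε p r a b x : ℝ}

lemma neg_log_mul_eq (hε : 0 < ε) (hx : 0 < x) : -log (ε * x) = -log ε - log x := by
  rw [log_mul hε.ne' hx.ne']; ring

lemma logModulation_le_one (hε : ε ∈ Ioo 0 1) (hp : 0 ≤ p) (hx : 0 < x) (hx1 : x ≤ 1) :
    logModulation ε p x ≤ 1 := by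
  have hℓ : 0 < -log ε := neg_pos.mpr (log_neg hε.1 hε.2)
  refine rpow_le_one_of_one_le_of_nonpos ?_ (neg_nonpos.mpr hp)
  rw [one_le_div hℓ, neg_log_mul_eq hε.1 hx]
  linarith [log_nonpos hx.le hx1]

lemma logModulation_le_logModulation (hε : ε ∈ Ioo 0 1) (hp : 0 ≤ p) (ha : 0 < a)
    (hab : a ≤ b) (hb1 : b ≤ 1) : logModulation ε p a ≤ logModulation ε p b := by
  have hb : 0 < b := ha.trans_le hab
  have hℓ : 0 < -log ε := neg_pos.mpr (log_neg hε.1 hε.2)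
  unfold logModulation
  rw [neg_log_mul_eq hε.1 ha, neg_log_mul_eq hε.1 hb]
  refine rpow_le_rpow_of_nonpos (div_pos ?_ hℓ) ?_ (neg_nonpos.mpr hp)
  · linarith [log_nonpos hb.le hb1]
  · gcongr

/-- With `δ = -r/p`, the modulated kernel is `(x^δ (-log(εx)) / -log ε)^(-p)`, whose base
is increasing by `rpow_mul_sub_log_le_rpow_mul_sub_log` as soon as `δ · (-log ε) ≥ 1`. -/
lemma rpow_mul_logModulation_le (hε : ε ∈ Ioo 0 1) (hp : 0 < p) (hpr : p ≤ -r * -log ε)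
    (ha : 0 < a) (hab : a ≤ b) (hb1 : b ≤ 1) :
    b ^ r * logModulation ε p b ≤ a ^ r * logModulation ε p a := by
  set ℓ := -log ε
  set δ := -r / p
  have hℓ : 0 < ℓ := neg_pos.mpr (log_neg hε.1 hε.2)
  have hδ : 0 ≤ δ := div_nonneg (by nlinarith) hp.le
  have hkernel : ∀ x, 0 < x → x ≤ 1 →
      x ^ r * logModulation ε p x = (x ^ δ * (ℓ - log x) / ℓ) ^ (-p) := by
    intro x hx hx1
    have hpos : 0 ≤ ℓ - log x := by linarith [log_nonpos hx.le hx1]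
    rw [logModulation, neg_log_mul_eq hε.1 hx, mul_div_assoc,
      mul_rpow (rpow_nonneg hx.le δ) (div_nonneg hpos hℓ.le), ← rpow_mul hx.le]
    congr 2
    simp only [δ]
    field_simp [hp.ne']
  have hb : 0 < b := ha.trans_le hab
  rw [hkernel a ha (hab.trans hb1), hkernel b hb hb1]
  refine rpow_le_rpow_of_nonpos ?_ ?_ (neg_nonpos.mpr hp.le)
  · have : 0 < ℓ - log a := by linarith [log_nonpos ha.le (hab.trans hb1)]
    positivity
  · refine div_le_div_of_nonneg_right (rpow_mul_sub_log_le_rpow_mul_sub_log ha hab hδ ?_) hℓ.le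
    calc (1 : ℝ) ≤ δ * ℓ := by rw [div_mul_eq_mul_div, le_div_iff₀ hp]; linarith
      _ ≤ δ * (ℓ - log b) := by gcongr; linarith [log_nonpos hb.le hb1]

end logModulation

lemma sq_sub_mul_le_sq_sub {ga gb ma mb : ℝ} (hga : 0 ≤ ga) (hgab : gb ≤ ga) (hmab : ma ≤ mb)
    (hmb : mb ≤ 1) (hprod : gb * mb ≤ ga * ma) :
    (gb * mb - ga * ma) ^ 2 ≤ (gb - ga) ^ 2 := by
  have hle : ga * ma - gb * mb ≤ ga - gb :=
    calc ga * ma - gb * mb ≤ (ga - gb) * mb := by nlinarith [mul_le_mul_of_nonneg_left hmab hga]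
      _ ≤ ga - gb := mul_le_of_le_one_right (sub_nonneg.mpr hgab) hmb
  calc (gb * mb - ga * ma) ^ 2 = (ga * ma - gb * mb) ^ 2 := by ring
    _ ≤ (ga - gb) ^ 2 := pow_le_pow_left₀ (sub_nonneg.mpr hprod) hle 2
    _ = (gb - ga) ^ 2 := by ring

lemma sq_sub_rpow_mul_logModulation_le {ε p r a b : ℝ} (hε : ε ∈ Ioo 0 1) (hp : 0 < p)
    (hpr : p ≤ -r * -log ε) (ha : 0 < a) (hab : a ≤ b) (hb1 : b ≤ 1) :
    (b ^ r * logModulation ε p b - a ^ r * logModulation ε p a) ^ 2 ≤ (b ^ r - a ^ r) ^ 2 := by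
  have hr : r ≤ 0 := by nlinarith [neg_pos.mpr (log_neg hε.1 hε.2)]
  exact sq_sub_mul_le_sq_sub (rpow_nonneg ha.le r) (rpow_le_rpow_of_nonpos ha hab hr)
    (logModulation_le_logModulation hε hp.le ha hab hb1)
    (logModulation_le_one hε hp.le (ha.trans_le hab) hb1)
    (rpow_mul_logModulation_le hε hp hpr ha hab hb1)

lemma intervalIntegrable_rpow_sub {r : ℝ} (hr : -1 < r) (c s : ℝ) :
    IntervalIntegrable (fun u => (c - u) ^ r) volume 0 s := by
  simpa using (intervalIntegral.intervalIntegrable_rpow' hr (a := c) (b := c - s)).comp_sub_left c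

lemma intervalIntegrable_sq_rpow_sub_sub_rpow_sub {r s t : ℝ} (hr : -1 / 2 < r) (hs : 0 ≤ s)
    (hst : s ≤ t) :
    IntervalIntegrable (fun u => ((t - u) ^ r - (s - u) ^ r) ^ 2) volume 0 s := by
  have hdom := ((intervalIntegrable_rpow_sub (by linarith : -1 < 2 * r) t s).const_mul 2).add
    ((intervalIntegrable_rpow_sub (by linarith : -1 < 2 * r) s s).const_mul 2)
  refine hdom.mono_fun' (by fun_prop) ?_
  rw [uIoc_of_le hs]
  refine ae_restrict_of_forall_mem measurableSet_Ioc fun u hu => ?_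
  have hsu : 0 ≤ s - u := sub_nonneg.mpr hu.2
  have htu : 0 ≤ t - u := by linarith [hu.2]
  dsimp only
  rw [norm_of_nonneg (sq_nonneg _), mul_comm 2 r, rpow_mul htu, rpow_mul hsu, rpow_two, rpow_two]
  nlinarith [sq_nonneg ((t - u) ^ r + (s - u) ^ r)]

lemma intervalIntegral_mono_of_nonneg_of_le_Ioo {f g : ℝ → ℝ} {a b : ℝ} (hab : a ≤ b)
    (hg : IntervalIntegrable g volume a b) (hf : ∀ x ∈ Ioo a b, 0 ≤ f x)
    (hfg : ∀ x ∈ Ioo a b, f x ≤ g x) :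
    ∫ x in a..b, f x ≤ ∫ x in a..b, g x := by
  simp only [intervalIntegral.integral_of_le hab, integral_Ioc_eq_integral_Ioo]
  exact integral_mono_of_nonneg (ae_restrict_of_forall_mem measurableSet_Ioo hf)
    (hg.1.mono_set Ioo_subset_Ioc_self) (ae_restrict_of_forall_mem measurableSet_Ioo hfg)

/-- Core comparison estimate for condition (K2) for log-modulated kernels: for `ε`
small enough, the squared `L²` increment of the normalized rescaled log-modulated
kernel over `[0,s]` is dominated by that of the Riemann–Liouville kernel. -/
theorem stmt_4 (H p : ℝ) (hH : H ∈ Set.Ioo 0 (1 / 2)) (hp : 1 < p) :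
    ∃ ε₀ ∈ Set.Ioo (0:ℝ) 1, ∀ ε ∈ Set.Ioo (0:ℝ) ε₀, ∀ s t : ℝ,
      0 ≤ s → s < t → t ≤ 1 →
      (∫ u in (0:ℝ)..s,
          ((t - u) ^ (H - 1 / 2) * ((-Real.log (ε * (t - u))) / (-Real.log ε)) ^ (-p)
            - (s - u) ^ (H - 1 / 2) * ((-Real.log (ε * (s - u))) / (-Real.log ε)) ^ (-p)) ^ 2)
        ≤ ∫ u in (0:ℝ)..s, ((t - u) ^ (H - 1 / 2) - (s - u) ^ (H - 1 / 2)) ^ 2 := by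
  obtain ⟨hH0, hH2⟩ := hH
  have hc : 0 < 1 / 2 - H := by linarith
  have hε₀ : exp (-(p / (1 / 2 - H))) < 1 := exp_lt_one_iff.mpr (neg_lt_zero.mpr (by positivity))
  refine ⟨exp (-(p / (1 / 2 - H))), ⟨exp_pos _, hε₀⟩, ?_⟩
  rintro ε ⟨hε0, hεε₀⟩ s t hs hst ht1
  have hpr : p ≤ -(H - 1 / 2) * -log ε := by
    have hlog := log_lt_log hε0 hεε₀
    rw [log_exp, lt_neg, div_lt_iff₀ hc] at hlog
    linarith
  refine intervalIntegral_mono_of_nonneg_of_le_Ioo hs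
    (intervalIntegrable_sq_rpow_sub_sub_rpow_sub (by linarith) hs hst.le)
    (fun u _ => sq_nonneg _) fun u hu => ?_
  exact sq_sub_rpow_mul_logModulation_le ⟨hε0, hεε₀.trans hε₀⟩ (by linarith) hpr
    (by linarith [hu.2]) (by linarith) (by linarith [hu.1])
end

section
/- Let H ∈ (0,1/2), p > 1 and C > 0. For ε ∈ (0,1) define K^ε(r,u) = C ε^H (r−u)^{H−1/2}(−log(ε(r−u)))^{−p} for 0 ≤ u < r ≤ 1 and K^ε(r,u) = 0 for u ≥ r. Then there exist constants M > 0 and ε₀ ∈ (0,1) such that for every ε ∈ (0,ε₀) and all s, t ∈ [0,1] with s ≠ t, ∫_0^1 (K^ε(t,u) − K^ε(s,u))² du ≤ M ε^{2H} (−log ε)^{−2p} |t−s|^{2H}. -/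
/-!
Write `K^ε(r,u) = C ε^H φ(r-u)` with `φ(x) = x^{H-1/2}(-log(εx))^{-p}` for `x > 0` and `φ = 0`
otherwise. Once `-log ε ≥ p/(1/2-H)`, `φ` is nonnegative and decreasing on `(0,1]`, so for
`u < s < t` we have `(φ(s-u) - φ(t-u))² ≤ φ(s-u)² - φ(t-u)²`. Integrating, the part of the
increment over `[0,s]` and the part over `[s,t]` are each at most `∫_0^{t-s} φ²`. Finally
`φ(x)² ≤ (-log ε)^{-2p} x^{2H-1}` on `(0,1]`, which integrates to `(-log ε)^{-2p}(t-s)^{2H}/(2H)`.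
-/

open Real Filter Set MeasureTheory

open intervalIntegral

section DecreasingKernel

variable {φ : ℝ → ℝ} {T s t : ℝ}

lemma IntervalIntegrable.of_mem_Icc {f : ℝ → ℝ} (hf : IntervalIntegrable f volume 0 T)
    {a b : ℝ} (ha : a ∈ Icc 0 T) (hb : b ∈ Icc 0 T) : IntervalIntegrable f volume a b :=
  hf.mono_set (uIcc_subset_uIcc (mem_uIcc_of_le ha.1 ha.2) (mem_uIcc_of_le hb.1 hb.2))

lemma intervalIntegrable_sq_comp_sub_left (hφ0 : ∀ x ≤ 0, φ x = 0)
    (hφint : IntervalIntegrable (fun x => φ x ^ 2) volume 0 T) {c : ℝ} (hc : c ∈ Icc 0 T) :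
    IntervalIntegrable (fun u => φ (c - u) ^ 2) volume 0 T := by
  have hneg : IntervalIntegrable (fun x => φ x ^ 2) volume (c - T) 0 := by
    refine (intervalIntegrable_const (c := (0 : ℝ))).congr fun x hx => ?_
    rw [uIoc_of_le (by linarith [hc.2])] at hx
    simp [hφ0 x hx.2]
  have := (hneg.trans (hφint.of_mem_Icc ⟨le_rfl, hc.1.trans hc.2⟩ hc)).comp_sub_left c
  simpa using this.symm

lemma intervalIntegrable_sq_sub_comp_sub (hφm : Measurable φ) (hφ0 : ∀ x ≤ 0, φ x = 0)
    (hφnn : ∀ x ≤ T, 0 ≤ φ x) (hφint : IntervalIntegrable (fun x => φ x ^ 2) volume 0 T)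
    (hs : s ∈ Icc 0 T) (ht : t ∈ Icc 0 T) :
    IntervalIntegrable (fun u => (φ (t - u) - φ (s - u)) ^ 2) volume 0 T := by
  refine ((intervalIntegrable_sq_comp_sub_left hφ0 hφint ht).add
    (intervalIntegrable_sq_comp_sub_left hφ0 hφint hs)).mono_fun' (by fun_prop) ?_
  filter_upwards [self_mem_ae_restrict measurableSet_uIoc] with u hu
  rw [uIoc_of_le (hs.1.trans hs.2)] at hu
  have := hφnn (t - u) (by linarith [hu.1, ht.2])
  have := hφnn (s - u) (by linarith [hu.1, hs.2])
  rw [Real.norm_of_nonneg (sq_nonneg _)]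
  nlinarith

lemma integral_sq_sub_comp_sub_le_sub (hφm : Measurable φ) (hφ0 : ∀ x ≤ 0, φ x = 0)
    (hφnn : ∀ x ≤ T, 0 ≤ φ x) (hφanti : AntitoneOn φ (Ioc 0 T))
    (hφint : IntervalIntegrable (fun x => φ x ^ 2) volume 0 T)
    (hs : 0 ≤ s) (hst : s ≤ t) (ht : t ≤ T) :
    ∫ u in 0..s, (φ (t - u) - φ (s - u)) ^ 2
      ≤ (∫ x in 0..s, φ x ^ 2) - ∫ x in (t - s)..t, φ x ^ 2 := by
  have hsT : s ∈ Icc 0 T := ⟨hs, hst.trans ht⟩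
  have htT : t ∈ Icc 0 T := ⟨hs.trans hst, ht⟩
  have h0T : (0 : ℝ) ∈ Icc 0 T := ⟨le_rfl, htT.1.trans ht⟩
  have hgs := intervalIntegrable_sq_comp_sub_left hφ0 hφint hsT
  have hgt := intervalIntegrable_sq_comp_sub_left hφ0 hφint htT
  have hcomp : ∫ u in 0..s, (φ (s - u) ^ 2 - φ (t - u) ^ 2)
      = (∫ x in 0..s, φ x ^ 2) - ∫ x in (t - s)..t, φ x ^ 2 := by
    rw [integral_sub (hgs.of_mem_Icc h0T hsT) (hgt.of_mem_Icc h0T hsT),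
      integral_comp_sub_left (fun x => φ x ^ 2) s, integral_comp_sub_left (fun x => φ x ^ 2) t]
    simp
  rw [← hcomp]
  refine integral_mono_on_of_le_Ioo hs
    ((intervalIntegrable_sq_sub_comp_sub hφm hφ0 hφnn hφint hsT htT).of_mem_Icc h0T hsT)
    ((hgs.sub hgt).of_mem_Icc h0T hsT) fun u hu => ?_
  have h1 := hφnn (t - u) (by linarith [hu.1])
  have h2 : φ (t - u) ≤ φ (s - u) := hφanti ⟨sub_pos.2 hu.2, by linarith [hu.1]⟩
    ⟨by linarith [hu.2], by linarith [hu.1]⟩ (by linarith)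
  nlinarith

lemma integral_sq_sub_comp_sub_eq_of_le (hφ0 : ∀ x ≤ 0, φ x = 0) (hst : s ≤ t) :
    ∫ u in s..t, (φ (t - u) - φ (s - u)) ^ 2 = ∫ x in 0..(t - s), φ x ^ 2 := by
  rw [← sub_self t, ← integral_comp_sub_left (fun x => φ x ^ 2) t]
  refine integral_congr fun u hu => ?_
  rw [uIcc_of_le hst] at hu
  simp [hφ0 (s - u) (by linarith [hu.1])]

theorem integral_sq_sub_comp_sub_le (hφm : Measurable φ) (hφ0 : ∀ x ≤ 0, φ x = 0)
    (hφnn : ∀ x ≤ T, 0 ≤ φ x) (hφanti : AntitoneOn φ (Ioc 0 T))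
    (hφint : IntervalIntegrable (fun x => φ x ^ 2) volume 0 T)
    (hs : 0 ≤ s) (hst : s ≤ t) (ht : t ≤ T) :
    ∫ u in 0..T, (φ (t - u) - φ (s - u)) ^ 2 ≤ 2 * ∫ x in 0..(t - s), φ x ^ 2 := by
  have hsT : s ∈ Icc 0 T := ⟨hs, hst.trans ht⟩
  have htT : t ∈ Icc 0 T := ⟨hs.trans hst, ht⟩
  have h0T : (0 : ℝ) ∈ Icc 0 T := ⟨le_rfl, htT.1.trans ht⟩
  have hTT : T ∈ Icc 0 T := ⟨h0T.2, le_rfl⟩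
  have hδT : t - s ∈ Icc 0 T := ⟨by linarith, by linarith⟩
  have hF := intervalIntegrable_sq_sub_comp_sub hφm hφ0 hφnn hφint hsT htT
  have right : ∫ u in t..T, (φ (t - u) - φ (s - u)) ^ 2 = 0 := by
    rw [integral_congr (g := fun _ => (0 : ℝ)), intervalIntegral.integral_zero]
    intro u hu
    rw [uIcc_of_le ht] at hu
    simp [hφ0 (s - u) (by linarith [hu.1]), hφ0 (t - u) (by linarith [hu.1])]
  have split : (∫ x in 0..s, φ x ^ 2) + ∫ x in s..t, φ x ^ 2
      = (∫ x in 0..(t - s), φ x ^ 2) + ∫ x in (t - s)..t, φ x ^ 2 := by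
    rw [integral_add_adjacent_intervals (hφint.of_mem_Icc h0T hsT) (hφint.of_mem_Icc hsT htT),
      integral_add_adjacent_intervals (hφint.of_mem_Icc h0T hδT) (hφint.of_mem_Icc hδT htT)]
  rw [← integral_add_adjacent_intervals (hF.of_mem_Icc h0T hsT) (hF.of_mem_Icc hsT hTT),
    ← integral_add_adjacent_intervals (hF.of_mem_Icc hsT htT) (hF.of_mem_Icc htT hTT), right,
    integral_sq_sub_comp_sub_eq_of_le hφ0 hst]
  linarith [integral_sq_sub_comp_sub_le_sub hφm hφ0 hφnn hφanti hφint hs hst ht,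
    integral_nonneg (μ := volume) hst fun x _ => sq_nonneg (φ x)]

end DecreasingKernel

noncomputable def logKernel (H p ε x : ℝ) : ℝ :=
  if 0 < x then x ^ (H - 1 / 2) * (-log (ε * x)) ^ (-p) else 0

lemma Keps_eq_mul_logKernel (H p C ε r u : ℝ) :
    Keps H p C ε r u = C * ε ^ H * logKernel H p ε (r - u) := by
  simp only [Keps, logKernel, sub_pos]
  split_ifs <;> ring

section LogKernel

variable {H p ε x : ℝ}

lemma logKernel_of_nonpos (hx : x ≤ 0) : logKernel H p ε x = 0 := if_neg hx.not_gt

lemma measurable_logKernel : Measurable (logKernel H p ε) :=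
  Measurable.ite measurableSet_Ioi (by fun_prop) measurable_const

lemma neg_log_le_neg_log_mul (hε : 0 < ε) (hx : 0 < x) (hx1 : x ≤ 1) :
    -log ε ≤ -log (ε * x) := by
  rw [log_mul hε.ne' hx.ne']
  linarith [log_nonpos hx.le hx1]

lemma neg_log_mul_pos (hε : 0 < ε) (hε1 : ε < 1) (hx : 0 < x) (hx1 : x ≤ 1) :
    0 < -log (ε * x) :=
  (neg_pos.2 (log_neg hε hε1)).trans_le (neg_log_le_neg_log_mul hε hx hx1)

lemma logKernel_nonneg (hε : 0 < ε) (hε1 : ε < 1) (hx1 : x ≤ 1) : 0 ≤ logKernel H p ε x := by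
  rcases le_or_gt x 0 with hx | hx
  · rw [logKernel_of_nonpos hx]
  · rw [logKernel, if_pos hx]
    exact mul_nonneg (rpow_nonneg hx.le _) (rpow_nonneg (neg_log_mul_pos hε hε1 hx hx1).le _)

lemma hasDerivAt_logKernel (hε : 0 < ε) (hx : 0 < x) (hL : 0 < -log (ε * x)) :
    HasDerivAt (logKernel H p ε)
      (x ^ (H - 1 / 2 - 1) * (-log (ε * x)) ^ (-p - 1) * ((H - 1 / 2) * -log (ε * x) + p)) x := by
  have hlog : HasDerivAt (fun y => -log (ε * y)) (-x⁻¹) x := by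
    refine ((((hasDerivAt_id x).const_mul ε).log (mul_pos hε hx).ne').neg).congr_deriv ?_
    simp only [id, mul_one]
    field_simp
  have hprod := (hasDerivAt_rpow_const (p := H - 1 / 2) (Or.inl hx.ne')).mul
    (hlog.rpow_const (p := -p) (Or.inl hL.ne'))
  have hx' : x ^ (H - 1 / 2) = x ^ (H - 1 / 2 - 1) * x := by
    rw [← rpow_add_one hx.ne']; ring_nf
  have hL' : (-log (ε * x)) ^ (-p) = (-log (ε * x)) ^ (-p - 1) * -log (ε * x) := by
    rw [← rpow_add_one hL.ne']; ring_nf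
  refine (hprod.congr_deriv ?_).congr_of_eventuallyEq ?_
  · rw [hx', hL']
    field_simp
  · filter_upwards [Ioi_mem_nhds hx] with y hy
    exact if_pos hy

lemma antitoneOn_logKernel (hH : H < 1 / 2) (hε : 0 < ε) (hε1 : ε < 1)
    (hℓ : p / (1 / 2 - H) ≤ -log ε) : AntitoneOn (logKernel H p ε) (Ioc 0 1) := by
  have hderiv : ∀ x ∈ Ioc (0 : ℝ) 1, HasDerivAt (logKernel H p ε)
      (x ^ (H - 1 / 2 - 1) * (-log (ε * x)) ^ (-p - 1) * ((H - 1 / 2) * -log (ε * x) + p)) x :=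
    fun x hx => hasDerivAt_logKernel hε hx.1 (neg_log_mul_pos hε hε1 hx.1 hx.2)
  refine antitoneOn_of_hasDerivWithinAt_nonpos (convex_Ioc 0 1)
    (fun x hx => (hderiv x hx).continuousAt.continuousWithinAt)
    (fun x hx => (hderiv x (interior_subset hx)).hasDerivWithinAt) fun x hx => ?_
  rw [interior_Ioc] at hx
  have hL := neg_log_mul_pos hε hε1 hx.1 hx.2.le
  have hA : p ≤ (1 / 2 - H) * -log (ε * x) := by
    rw [div_le_iff₀' (by linarith)] at hℓ
    nlinarith [neg_log_le_neg_log_mul hε hx.1 hx.2.le]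
  exact mul_nonpos_of_nonneg_of_nonpos
    (mul_nonneg (rpow_nonneg hx.1.le _) (rpow_nonneg hL.le _)) (by linarith)

lemma logKernel_sq_le (hp : 0 ≤ p) (hε : 0 < ε) (hε1 : ε < 1) (hx : 0 < x) (hx1 : x ≤ 1) :
    logKernel H p ε x ^ 2 ≤ (-log ε) ^ (-(2 * p)) * x ^ (2 * H - 1) := by
  have hℓ : 0 < -log ε := neg_pos.2 (log_neg hε hε1)
  have hle : logKernel H p ε x ≤ (-log ε) ^ (-p) * x ^ (H - 1 / 2) := by
    rw [logKernel, if_pos hx, mul_comm]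
    exact mul_le_mul_of_nonneg_right
      (rpow_le_rpow_of_nonpos hℓ (neg_log_le_neg_log_mul hε hx hx1) (by linarith))
      (rpow_nonneg hx.le _)
  calc logKernel H p ε x ^ 2 ≤ ((-log ε) ^ (-p) * x ^ (H - 1 / 2)) ^ 2 :=
        pow_le_pow_left₀ (logKernel_nonneg hε hε1 hx1) hle 2
    _ = (-log ε) ^ (-(2 * p)) * x ^ (2 * H - 1) := by
        rw [mul_pow, ← rpow_mul_natCast hℓ.le, ← rpow_mul_natCast hx.le]
        ring_nf

lemma intervalIntegrable_logKernel_sq (hH : 0 < H) (hp : 0 ≤ p) (hε : 0 < ε) (hε1 : ε < 1) :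
    IntervalIntegrable (fun x => logKernel H p ε x ^ 2) volume 0 1 := by
  refine ((intervalIntegral.intervalIntegrable_rpow' (r := 2 * H - 1) (by linarith)).const_mul
    ((-log ε) ^ (-(2 * p)))).mono_fun'
    (measurable_logKernel.pow_const 2).aestronglyMeasurable ?_
  filter_upwards [self_mem_ae_restrict measurableSet_uIoc] with x hx
  rw [uIoc_of_le zero_le_one] at hx
  rw [Real.norm_of_nonneg (sq_nonneg _)]
  exact logKernel_sq_le hp hε hε1 hx.1 hx.2

lemma integral_logKernel_sq_le (hH : 0 < H) (hp : 0 ≤ p) (hε : 0 < ε) (hε1 : ε < 1)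
    {δ : ℝ} (hδ : δ ∈ Icc (0 : ℝ) 1) :
    ∫ x in 0..δ, logKernel H p ε x ^ 2 ≤ (-log ε) ^ (-(2 * p)) * δ ^ (2 * H) / (2 * H) := by
  have hr : -1 < 2 * H - 1 := by linarith
  calc ∫ x in 0..δ, logKernel H p ε x ^ 2
      ≤ ∫ x in 0..δ, (-log ε) ^ (-(2 * p)) * x ^ (2 * H - 1) :=
        integral_mono_on_of_le_Ioo hδ.1
          ((intervalIntegrable_logKernel_sq hH hp hε hε1).of_mem_Icc ⟨le_rfl, zero_le_one⟩ hδ)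
          ((intervalIntegral.intervalIntegrable_rpow' hr).const_mul _)
          fun x hx => logKernel_sq_le hp hε hε1 hx.1 (hx.2.le.trans hδ.2)
    _ = (-log ε) ^ (-(2 * p)) * δ ^ (2 * H) / (2 * H) := by
        rw [intervalIntegral.integral_const_mul, integral_rpow (Or.inl hr),
          zero_rpow (by linarith)]
        ring_nf

end LogKernel

theorem integral_sq_sub_Keps_le {H p C ε : ℝ} (hH0 : 0 < H) (hH : H < 1 / 2) (hp : 0 ≤ p)
    (hε : 0 < ε) (hε1 : ε < 1) (hℓ : p / (1 / 2 - H) ≤ -log ε)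
    {s t : ℝ} (hs : s ∈ Icc (0 : ℝ) 1) (ht : t ∈ Icc (0 : ℝ) 1) :
    ∫ u in 0..1, (Keps H p C ε t u - Keps H p C ε s u) ^ 2
      ≤ C ^ 2 / H * ε ^ (2 * H) * (-log ε) ^ (-(2 * p)) * |t - s| ^ (2 * H) := by
  wlog hst : s ≤ t generalizing s t
  · rw [abs_sub_comm]
    refine le_of_eq_of_le (integral_congr fun u _ => ?_) (this ht hs (le_of_not_ge hst))
    ring
  simp_rw [Keps_eq_mul_logKernel, ← mul_sub, mul_pow (C * ε ^ H)]
  rw [intervalIntegral.integral_const_mul, abs_of_nonneg (sub_nonneg.2 hst)]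
  have hincr := integral_sq_sub_comp_sub_le measurable_logKernel
    (fun _ => logKernel_of_nonpos) (fun _ => logKernel_nonneg hε hε1)
    (antitoneOn_logKernel hH hε hε1 hℓ) (intervalIntegrable_logKernel_sq hH0 hp hε hε1)
    hs.1 hst ht.2
  have hsq := integral_logKernel_sq_le hH0 hp hε hε1 (δ := t - s)
    ⟨sub_nonneg.2 hst, by linarith [hs.1, ht.2]⟩
  calc (C * ε ^ H) ^ 2 * ∫ u in 0..1, (logKernel H p ε (t - u) - logKernel H p ε (s - u)) ^ 2
      ≤ (C * ε ^ H) ^ 2 * (2 * ((-log ε) ^ (-(2 * p)) * (t - s) ^ (2 * H) / (2 * H))) :=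
        mul_le_mul_of_nonneg_left (by linarith) (sq_nonneg _)
    _ = C ^ 2 / H * ε ^ (2 * H) * (-log ε) ^ (-(2 * p)) * (t - s) ^ (2 * H) := by
        rw [mul_pow, ← rpow_mul_natCast hε.le]
        field_simp
        ring_nf

/-- Condition (K2) for log-modulated rough volatility: uniform Hölder-type `L²`
increment bound at the small-noise scale `γ_ε = ε^H(-log ε)^{-p}`, with exponent `H`. -/
theorem stmt_5 (H p C : ℝ) (hH : H ∈ Set.Ioo 0 (1 / 2)) (hp : 1 < p) (hC : 0 < C) :
    ∃ M > 0, ∃ ε₀ ∈ Set.Ioo (0:ℝ) 1, ∀ ε ∈ Set.Ioo (0:ℝ) ε₀,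
      ∀ s ∈ Set.Icc (0:ℝ) 1, ∀ t ∈ Set.Icc (0:ℝ) 1, s ≠ t →
      (∫ u in (0:ℝ)..1, (Keps H p C ε t u - Keps H p C ε s u) ^ 2)
        ≤ M * ε ^ (2 * H) * (-Real.log ε) ^ (-(2 * p)) * |t - s| ^ (2 * H) := by
  obtain ⟨hH0, hH⟩ := hH
  have hε₀ : exp (-(p / (1 / 2 - H))) < 1 :=
    exp_lt_one_iff.2 (neg_neg_of_pos (div_pos (by linarith) (by linarith)))
  refine ⟨C ^ 2 / H, by positivity, _, ⟨exp_pos _, hε₀⟩, fun ε hε s hs t ht _ => ?_⟩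
  have hℓ : p / (1 / 2 - H) ≤ -log ε := by
    have := log_lt_log hε.1 hε.2
    rw [log_exp] at this
    linarith
  exact integral_sq_sub_Keps_le hH0 hH (by linarith) hε.1 (hε.2.trans hε₀) hℓ hs ht
end
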